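/- (Corollary 11, Dey–Edelsbrunner bound) Let Σ be a finite connected 2-dimensional simplicial complex with β_2(Σ) ≥ 1 such that the space Z_2(Σ) of Z_2 2-cycles admits a 2-complete basis (by Theorem 2 of the paper, this holds whenever Σ is PL embeddable into ℝ^{3}). Then f_2(Σ) ≤ n·(n − 3), where n is the number of vertices of Σ. -/

import Mathlib

open Finset

/-- A finite simplicial complex on a finite vertex type `V`:
a finite nonempty collection of nonempty finite sets (faces)
closed under taking nonempty subsets. -/
structure SComplex (V : Type) [DecidableEq V] [Fintype V] where
  faces : Finset (Finset V)
  nonempty : faces.Nonempty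
  no_empty : ∀ σ ∈ faces, σ ≠ ∅
  down_closed : ∀ σ ∈ faces, ∀ τ, τ ⊆ σ → τ ≠ ∅ → τ ∈ faces

namespace SComplex

variable {V : Type} [DecidableEq V] [Fintype V]

/-- The set of faces of dimension `i` (i.e. of cardinality `i+1`). -/
def facesDim (K : SComplex V) (i : ℕ) : Finset (Finset V) :=
  K.faces.filter (fun σ => σ.card = i + 1)

/-- `fnum K i` is the face number `f_i`. -/
def fnum (K : SComplex V) (i : ℕ) : ℕ := (K.facesDim i).card

/-- The space of `Z_2` `i`-chains: functions from the `i`-faces to `Z_2`. -/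
abbrev Chains (K : SComplex V) (i : ℕ) : Type := {σ // σ ∈ K.facesDim i} → ZMod 2

/-- The boundary map `∂_i : C_i → C_{i-1}` (and `∂_0 = 0`): the value of `∂ c` on an
`(i-1)`-face `τ` is the sum over `i`-faces `σ ⊇ τ` of `c σ`. -/
def boundary (K : SComplex V) (i : ℕ) : Chains K i →ₗ[ZMod 2] Chains K (i - 1) :=
  if i = 0 then 0 else
  { toFun := fun c τ =>
      ∑ σ : {σ // σ ∈ K.facesDim i}, if (τ : Finset V) ⊆ (σ : Finset V) then c σ else 0
    map_add' := by
      intro c d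
      funext τ
      show (∑ σ : {σ // σ ∈ K.facesDim i}, _) = _
      rw [Pi.add_apply, ← Finset.sum_add_distrib]
      apply Finset.sum_congr rfl
      intro σ _
      by_cases h : (τ : Finset V) ⊆ (σ : Finset V) <;> simp [h]
    map_smul' := by
      intro a c
      funext τ
      show (∑ σ : {σ // σ ∈ K.facesDim i}, _) = _
      rw [RingHom.id_apply, Pi.smul_apply, smul_eq_mul, Finset.mul_sum]
      apply Finset.sum_congr rfl
      intro σ _
      by_cases h : (τ : Finset V) ⊆ (σ : Finset V) <;> simp [h] }

/-- The `i`-th `Z_2` Betti number: `dim ker ∂_i − rank ∂_{i+1}`. -/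
noncomputable def betti (K : SComplex V) (i : ℕ) : ℕ :=
  Module.finrank (ZMod 2) (LinearMap.ker (K.boundary i)) -
    Module.finrank (ZMod 2) (LinearMap.range (K.boundary (i + 1)))

/-- The number of `i`-faces in the support of a chain. -/
def suppCard {K : SComplex V} {i : ℕ} (c : Chains K i) : ℕ :=
  (Finset.univ.filter (fun σ => c σ ≠ 0)).card

/-- The girth: the minimal support size of a nonzero `d`-cycle. -/
noncomputable def girth (K : SComplex V) (d : ℕ) : ℕ :=
  sInf {n | ∃ c : Chains K d, c ∈ LinearMap.ker (K.boundary d) ∧ c ≠ 0 ∧ suppCard c = n}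

/-- `Z_d(K)` admits an `m`-complete basis: a basis of the space of `d`-cycles such that every
`d`-face lies in the support of at most `m` basis elements. -/
def HasCompleteBasis (K : SComplex V) (d m : ℕ) : Prop :=
  ∃ (ι : Type) (_ : Fintype ι) (b : Module.Basis ι (ZMod 2) (LinearMap.ker (K.boundary d))),
    ∀ σ : {σ // σ ∈ K.facesDim d},
      (Finset.univ.filter (fun i : ι => (b i).1 σ ≠ 0)).card ≤ m

/-- `K` is `d`-dimensional: `d` is the maximal dimension of a face. -/
def IsDim (K : SComplex V) (d : ℕ) : Prop :=
  (∀ σ ∈ K.faces, σ.card ≤ d + 1) ∧ ∃ σ ∈ K.faces, σ.card = d + 1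

/-- `K` is pure `d`-dimensional: every face is contained in a `d`-face. -/
def IsPure (K : SComplex V) (d : ℕ) : Prop :=
  ∀ σ ∈ K.faces, ∃ τ ∈ K.faces, σ ⊆ τ ∧ τ.card = d + 1

/-- A `d`-dimensional complex is balanced if its vertices can be colored with `d+1` colors
so that the coloring is injective on every face. -/
def IsBalanced (K : SComplex V) (d : ℕ) : Prop :=
  ∃ coloring : V → Fin (d + 1), ∀ σ ∈ K.faces, Set.InjOn coloring (σ : Set V)

/-- The `d`-skeleton of `K`: all faces of dimension at most `d`. -/
def skeleton (K : SComplex V) (d : ℕ) : SComplex V where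
  faces := K.faces.filter (fun σ => σ.card ≤ d + 1)
  nonempty := by
    obtain ⟨σ, hσ⟩ := K.nonempty
    obtain ⟨v, hv⟩ := Finset.nonempty_iff_ne_empty.mpr (K.no_empty σ hσ)
    refine ⟨{v}, Finset.mem_filter.mpr ⟨K.down_closed σ hσ {v}
      (Finset.singleton_subset_iff.mpr hv) (Finset.singleton_ne_empty v), by simp⟩⟩
  no_empty := by
    intro σ hσ
    exact K.no_empty σ (Finset.mem_filter.mp hσ).1
  down_closed := by
    intro σ hσ τ hτσ hτ
    rw [Finset.mem_filter] at hσ ⊢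
    exact ⟨K.down_closed σ hσ.1 τ hτσ hτ, le_trans (Finset.card_le_card hτσ) hσ.2⟩

end SComplex

/-!
Let `z₁, …, z_k` be a 2-complete basis of the cycle space `Z₂`, so `k = dim Z₂ ≥ 1`, and let
`m(σ) ≤ 2` count the basis cycles whose support contains the triangle `σ`. A nonzero 2-cycle has
at least 4 triangles (each edge of a triangle in its support lies in a second one), so
`Σ_σ m(σ) ≥ 4k`. The cycle `z₁ + ⋯ + z_k` is nonzero and supported on the triangles with `m(σ)`
odd, i.e. `m(σ) = 1`, so at least 4 triangles have `m(σ) = 1`; hence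
`4k + 4 ≤ Σ_σ (m(σ) + [m(σ) = 1]) ≤ 2 f₂`. On the other hand rank–nullity, `∂∂ = 0` and `β₀ = 1`
give `k ≥ f₂ - f₁ + f₀ - 1`. Together, `f₂ ≤ 2 f₁ - 2 f₀ ≤ n (n - 1) - 2 n`.
-/
namespace Finset

variable {α : Type*} [DecidableEq α]

theorem card_filter_powerset_card_eq_add_one {s t : Finset α} (hst : s ⊆ t) :
    #{u ∈ t.powerset | s ⊆ u ∧ #u = #s + 1} = #t - #s := by
  have himage : {u ∈ t.powerset | s ⊆ u ∧ #u = #s + 1} = (t \ s).image (insert · s) := by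
    ext u
    simp only [mem_filter, mem_powerset, mem_image, mem_sdiff]
    constructor
    · rintro ⟨hut, hsu, hcard⟩
      obtain ⟨a, has, rfl⟩ := exists_eq_insert_iff.2 ⟨hsu, hcard.symm⟩
      exact ⟨a, ⟨(insert_subset_iff.1 hut).1, has⟩, rfl⟩
    · rintro ⟨a, ⟨hat, has⟩, rfl⟩
      exact ⟨insert_subset hat hst, subset_insert a s, card_insert_of_notMem has⟩
  rw [himage, card_image_of_injOn, card_sdiff_of_subset hst]
  intro a ha b _ hab
  exact (insert_inj (mem_sdiff.1 ha).2).1 hab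

end Finset

namespace SComplex

variable {V : Type} [DecidableEq V] [Fintype V] (K : SComplex V)

theorem mem_facesDim {i : ℕ} {σ : Finset V} : σ ∈ K.facesDim i ↔ σ ∈ K.faces ∧ #σ = i + 1 :=
  mem_filter

theorem mem_facesDim_of_subset {i j : ℕ} {σ τ : Finset V} (hσ : σ ∈ K.facesDim i) (hτσ : τ ⊆ σ)
    (hτ : #τ = j + 1) : τ ∈ K.facesDim j :=
  (K.mem_facesDim).2 ⟨K.down_closed σ ((K.mem_facesDim).1 hσ).1 τ hτσ
    (nonempty_iff_ne_empty.1 (card_pos.1 (by omega))), hτ⟩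

theorem boundary_zero : K.boundary 0 = 0 := if_pos rfl

theorem boundary_apply {i : ℕ} (hi : i ≠ 0) (c : Chains K i)
    (τ : {τ // τ ∈ K.facesDim (i - 1)}) :
    K.boundary i c τ = ∑ σ : {σ // σ ∈ K.facesDim i}, if (τ : Finset V) ⊆ σ then c σ else 0 := by
  rw [boundary, if_neg hi]
  rfl

theorem card_faces_between {j : ℕ} {τ σ : Finset V} (hτ : τ ∈ K.facesDim j)
    (hσ : σ ∈ K.facesDim (j + 2)) (hτσ : τ ⊆ σ) :
    #{ρ : {ρ // ρ ∈ K.facesDim (j + 1)} | τ ⊆ ρ ∧ (ρ : Finset V) ⊆ σ} = 2 := by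
  have hτc := ((K.mem_facesDim).1 hτ).2
  have hσc := ((K.mem_facesDim).1 hσ).2
  rw [← card_map (Function.Embedding.subtype _), ← (by omega : #σ - #τ = 2),
    ← card_filter_powerset_card_eq_add_one hτσ]
  congr 1
  ext ρ
  simp only [mem_map, mem_filter, mem_univ, true_and, Function.Embedding.coe_subtype,
    Subtype.exists, exists_and_right, exists_eq_right, mem_powerset, mem_facesDim]
  constructor
  · rintro ⟨⟨⟨-, hρc⟩, hτρ⟩, hρσ⟩
    exact ⟨hρσ, hτρ, by omega⟩
  · rintro ⟨hρσ, hτρ, hρc⟩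
    exact ⟨⟨(K.mem_facesDim).1 (K.mem_facesDim_of_subset (j := j + 1) hσ hρσ (by omega)), hτρ⟩,
      hρσ⟩

theorem even_card_faces_between {j : ℕ} {τ σ : Finset V} (hτ : τ ∈ K.facesDim j)
    (hσ : σ ∈ K.facesDim (j + 2)) :
    Even #{ρ : {ρ // ρ ∈ K.facesDim (j + 1)} | τ ⊆ ρ ∧ (ρ : Finset V) ⊆ σ} := by
  by_cases hτσ : τ ⊆ σ
  · rw [K.card_faces_between hτ hσ hτσ]
    exact even_two
  · rw [filter_false_of_mem fun ρ _ h => hτσ (h.1.trans h.2)]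
    exact Even.zero

theorem boundary_boundary (i : ℕ) (c : Chains K (i + 1)) :
    K.boundary i (K.boundary (i + 1) c) = 0 := by
  rcases i with _ | j
  · rw [boundary_zero, LinearMap.zero_apply]
  funext τ
  simp only [K.boundary_apply j.succ_ne_zero, K.boundary_apply (j + 1).succ_ne_zero, ← sum_filter]
  refine (sum_comm' (t' := univ) (s' := fun σ : {σ // σ ∈ K.facesDim (j + 2)} =>
      {ρ : {ρ // ρ ∈ K.facesDim (j + 1)} | (τ : Finset V) ⊆ ρ ∧ (ρ : Finset V) ⊆ σ})
    (by simp)).trans (sum_eq_zero fun σ _ => ?_)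
  rw [sum_const, ← Nat.cast_smul_eq_nsmul (ZMod 2)]
  convert zero_smul (ZMod 2) (c σ)
  exact (ZMod.natCast_eq_zero_iff_even).2 (K.even_card_faces_between τ.2 σ.2)

theorem exists_ne_mem_support_of_facet {d : ℕ} (hd : d ≠ 0) {z : Chains K d}
    (hz : K.boundary d z = 0) {σ : {σ // σ ∈ K.facesDim d}} (hσ : z σ ≠ 0)
    {e : Finset V} (he : e ∈ K.facesDim (d - 1)) (heσ : e ⊆ σ) :
    ∃ τ, τ ≠ σ ∧ e ⊆ τ ∧ z τ ≠ 0 := by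
  by_contra! h
  have hsum := congrFun hz ⟨e, he⟩
  rw [K.boundary_apply hd, sum_eq_single σ (fun τ _ hτσ => ite_eq_right_iff.2 (h τ hτσ))
    (fun hσ' => absurd (mem_univ σ) hσ'), if_pos heσ] at hsum
  exact hσ hsum

theorem add_two_le_suppCard {d : ℕ} (hd : d ≠ 0) {z : Chains K d} (hz : K.boundary d z = 0)
    (hz0 : z ≠ 0) : d + 2 ≤ suppCard z := by
  obtain ⟨σ, hσ⟩ : ∃ σ, z σ ≠ 0 := Function.ne_iff.1 hz0
  have hσc : #(σ : Finset V) = d + 1 := ((K.mem_facesDim).1 σ.2).2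
  set supp : Finset _ := {τ | z τ ≠ 0}
  have hσsupp : σ ∈ supp := mem_filter.2 ⟨mem_univ _, hσ⟩
  have hfacets : #((σ : Finset V).powersetCard d) ≤ #(supp.erase σ) := by
    refine card_le_card_of_forall_subsingleton
      (fun (e : Finset V) (τ : {τ // τ ∈ K.facesDim d}) => e ⊆ τ) ?_ ?_
    · intro e he
      obtain ⟨heσ, hec⟩ := mem_powersetCard.1 he
      obtain ⟨τ, hτσ, heτ, hτ⟩ := K.exists_ne_mem_support_of_facet hd hz hσ
        (K.mem_facesDim_of_subset σ.2 heσ (by omega)) heσ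
      exact ⟨τ, mem_erase.2 ⟨hτσ, mem_filter.2 ⟨mem_univ _, hτ⟩⟩, heτ⟩
    · intro τ hτ e₁ ⟨he₁, he₁τ⟩ e₂ ⟨he₂, he₂τ⟩
      obtain ⟨he₁σ, he₁c⟩ := mem_powersetCard.1 he₁
      obtain ⟨he₂σ, he₂c⟩ := mem_powersetCard.1 he₂
      by_contra hne
      have hspan : e₁ ∪ e₂ = σ := by
        refine eq_of_subset_of_card_le (union_subset he₁σ he₂σ) ?_
        by_contra! hlt
        exact hne ((eq_of_subset_of_card_le subset_union_left (by omega)).trans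
          (eq_of_subset_of_card_le subset_union_right (by omega)).symm)
      have hτc : #(τ : Finset V) = d + 1 := ((K.mem_facesDim).1 τ.2).2
      refine (mem_erase.1 hτ).1 (Subtype.ext (eq_of_subset_of_card_le ?_ (by omega)).symm)
      exact hspan ▸ union_subset he₁τ he₂τ
  rw [card_powersetCard, hσc, Nat.choose_succ_self_right, card_erase_of_mem hσsupp] at hfacets
  change d + 2 ≤ #supp
  omega

theorem finrank_chains (i : ℕ) : Module.finrank (ZMod 2) (Chains K i) = K.fnum i := by
  rw [Module.finrank_pi, Fintype.card_coe]
  rfl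

theorem finrank_ker_boundary_zero :
    Module.finrank (ZMod 2) (LinearMap.ker (K.boundary 0)) = K.fnum 0 := by
  rw [boundary_zero, LinearMap.ker_zero, finrank_top, finrank_chains]

theorem betti_le_finrank_ker (i : ℕ) :
    K.betti i ≤ Module.finrank (ZMod 2) (LinearMap.ker (K.boundary i)) :=
  Nat.sub_le _ _

theorem fnum_eq_finrank_range_add_finrank_ker (i : ℕ) :
    K.fnum i = Module.finrank (ZMod 2) (LinearMap.range (K.boundary i)) +
      Module.finrank (ZMod 2) (LinearMap.ker (K.boundary i)) := by
  rw [← finrank_chains, LinearMap.finrank_range_add_finrank_ker]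

theorem finrank_range_boundary_succ_le (i : ℕ) :
    Module.finrank (ZMod 2) (LinearMap.range (K.boundary (i + 1))) ≤
      Module.finrank (ZMod 2) (LinearMap.ker (K.boundary i)) :=
  Submodule.finrank_mono (LinearMap.range_le_ker_iff.2 (LinearMap.ext (K.boundary_boundary i)))

theorem fnum_add_finrank_ker_le (i : ℕ) :
    K.fnum (i + 2) + Module.finrank (ZMod 2) (LinearMap.ker (K.boundary i)) ≤
      K.fnum (i + 1) + Module.finrank (ZMod 2) (LinearMap.ker (K.boundary (i + 2))) +
        K.betti i := by
  have h₂ := K.fnum_eq_finrank_range_add_finrank_ker (i + 2)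
  have h₁ := K.fnum_eq_finrank_range_add_finrank_ker (i + 1)
  have hrange : Module.finrank (ZMod 2) (LinearMap.range (K.boundary (i + 2))) ≤
      Module.finrank (ZMod 2) (LinearMap.ker (K.boundary (i + 1))) :=
    K.finrank_range_boundary_succ_le (i + 1)
  unfold betti
  omega

def vertices : Finset V := {v | {v} ∈ K.faces}

theorem card_vertices : #K.vertices = K.fnum 0 := by
  have himage : K.facesDim 0 = K.vertices.image singleton := by
    ext σ
    simp only [mem_facesDim, vertices, mem_image, mem_filter, mem_univ, true_and, zero_add,
      card_eq_one]
    constructor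
    · rintro ⟨hσ, v, rfl⟩
      exact ⟨v, hσ, rfl⟩
    · rintro ⟨v, hv, rfl⟩
      exact ⟨hv, v, rfl⟩
  rw [fnum, himage, card_image_of_injective _ singleton_injective]

theorem facesDim_subset_powersetCard (i : ℕ) :
    K.facesDim i ⊆ K.vertices.powersetCard (i + 1) := by
  intro σ hσ
  obtain ⟨hσf, hσc⟩ := (K.mem_facesDim).1 hσ
  refine mem_powersetCard.2 ⟨fun v hv => mem_filter.2 ⟨mem_univ v, ?_⟩, hσc⟩
  exact K.down_closed σ hσf {v} (singleton_subset_iff.2 hv) (singleton_ne_empty v)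

theorem fnum_le_choose (i : ℕ) : K.fnum i ≤ (K.fnum 0).choose (i + 1) := by
  rw [← card_vertices, ← card_powersetCard]
  exact card_le_card (K.facesDim_subset_powersetCard i)

theorem two_mul_fnum_one_le : 2 * K.fnum 1 ≤ K.fnum 0 * (K.fnum 0 - 1) := by
  have h := K.fnum_le_choose 1
  rw [Nat.choose_two_right] at h
  have := Nat.div_mul_cancel (Nat.even_mul_pred_self (K.fnum 0)).two_dvd
  omega

end SComplex

theorem ZMod.two_sum_eq_card_filter_ne_zero {ι : Type*} (s : Finset ι) (f : ι → ZMod 2) :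
    ∑ i ∈ s, f i = #{i ∈ s | f i ≠ 0} := by
  rw [natCast_card_filter]
  refine sum_congr rfl fun i _ => ?_
  generalize f i = x
  revert x
  decide

theorem Module.Basis.mul_card_add_one_le_of_support_le_two {S ι : Type*} [Fintype S]
    [Fintype ι] [Nonempty ι] {W : Submodule (ZMod 2) (S → ZMod 2)} (b : Basis ι (ZMod 2) W)
    (hb : ∀ s, #{i | (b i : S → ZMod 2) s ≠ 0} ≤ 2) {g : ℕ}
    (hg : ∀ w ∈ W, w ≠ 0 → g ≤ #{s | w s ≠ 0}) :
    g * (Fintype.card ι + 1) ≤ 2 * Fintype.card S := by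
  set m : S → ℕ := fun s => #{i | (b i : S → ZMod 2) s ≠ 0}
  have hbasis : g * Fintype.card ι ≤ ∑ s, m s := by
    calc g * Fintype.card ι = ∑ _i : ι, g := by rw [sum_const, card_univ, smul_eq_mul, mul_comm]
      _ ≤ ∑ i, #{s | (b i : S → ZMod 2) s ≠ 0} :=
        sum_le_sum fun i _ => hg _ (b i).2 (by simpa using b.ne_zero i)
      _ = ∑ s, m s := by simp only [m, card_filter]; exact sum_comm
  set z : W := ∑ i, b i
  have hz0 : (z : S → ZMod 2) ≠ 0 := by
    intro h
    have := Fintype.linearIndependent_iff.1 b.linearIndependent (fun _ => 1)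
      (by simpa [z] using Subtype.ext (p := (· ∈ W)) h) (Classical.arbitrary ι)
    exact one_ne_zero this
  have hz : ∀ s, (z : S → ZMod 2) s = m s := by
    intro s
    simp only [z, Submodule.coe_sum, Finset.sum_apply, ZMod.two_sum_eq_card_filter_ne_zero, m]
  have hsupp : g ≤ #{s | m s = 1} := by
    refine (hg z z.2 hz0).trans (card_le_card fun s hs => ?_)
    have hodd := (mem_filter.1 hs).2
    rw [hz, Ne, ZMod.natCast_eq_zero_iff_even, Nat.even_iff] at hodd
    have : m s ≤ 2 := hb s
    exact mem_filter.2 ⟨mem_univ s, by omega⟩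
  have hpointwise : ∑ s, (m s + if m s = 1 then 1 else 0) ≤ ∑ _s : S, 2 :=
    sum_le_sum fun s _ => by have : m s ≤ 2 := hb s; split_ifs <;> omega
  rw [sum_add_distrib, ← card_filter, sum_const, card_univ, smul_eq_mul] at hpointwise
  linarith

open SComplex

theorem dey_edelsbrunner_general {V : Type} [DecidableEq V] [Fintype V]
    (K : SComplex V) (hconn : K.betti 0 = 1)
    (hβ : 1 ≤ K.betti 2) (hcb : K.HasCompleteBasis 2 2) :
    (K.fnum 2 : ℤ) ≤ (K.fnum 0 : ℤ) * ((K.fnum 0 : ℤ) - 3) := by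
  obtain ⟨ι, _, b, hb⟩ := hcb
  have hk : Module.finrank (ZMod 2) (LinearMap.ker (K.boundary 2)) = Fintype.card ι :=
    Module.finrank_eq_card_basis b
  have : Nonempty ι := Fintype.card_pos_iff.1 (by have := K.betti_le_finrank_ker 2; omega)
  have hcycles : 4 * (Fintype.card ι + 1) ≤ 2 * K.fnum 2 := by
    have := b.mul_card_add_one_le_of_support_le_two (g := 4) hb fun z hz hz0 =>
      K.add_two_le_suppCard two_ne_zero hz hz0
    rwa [Fintype.card_coe] at this
  have heuler : K.fnum 2 + K.fnum 0 ≤ K.fnum 1 + Fintype.card ι + 1 := by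
    simpa only [finrank_ker_boundary_zero, hconn, hk] using K.fnum_add_finrank_ker_le 0
  have hedges := K.two_mul_fnum_one_le
  have hn : 1 ≤ K.fnum 0 := hconn ▸ K.finrank_ker_boundary_zero ▸ K.betti_le_finrank_ker 0
  zify [hn] at hcycles heuler hedges
  linarith

/-- Corollary 11, Dey–Edelsbrunner bound. -/
theorem dey_edelsbrunner {V : Type} [DecidableEq V] [Fintype V]
    (K : SComplex V) (hdim : K.IsDim 2) (hconn : K.betti 0 = 1)
    (hβ : 1 ≤ K.betti 2) (hcb : K.HasCompleteBasis 2 2) :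
    (K.fnum 2 : ℤ) ≤ (K.fnum 0 : ℤ) * ((K.fnum 0 : ℤ) - 3) :=
  dey_edelsbrunner_general K hconn hβ hcb
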